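/- With G = C_m ≀ S_n acting diagonally on P_n^{⊗t} and the symmetrization map π(x̄^f) = Σ_{g∈G} φ_D(g)(x̄^f), let f, h be exponent arrays with Σ_i f_i(j) ≡ 0 ≡ Σ_i h_i(j) (mod m) for all j. Then the following are equivalent: (i) the supports (sets of monomials with nonzero coefficient) of π(x̄^f) and π(x̄^h) intersect; (ii) π(x̄^f) = π(x̄^h); (iii) there exists σ ∈ S_n with h_i(j) = f_i(σ(j)) for all i, j. -/

import Mathlib

open Finset

@[ext]
structure GenPerm (m n : ℕ) where
  σ : Equiv.Perm (Fin n)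
  c : Fin n → ZMod m
deriving DecidableEq

namespace GenPerm

variable {m n : ℕ}

instance [NeZero m] : Fintype (GenPerm m n) :=
  Fintype.ofEquiv (Equiv.Perm (Fin n) × (Fin n → ZMod m))
    { toFun := fun p => ⟨p.1, p.2⟩
      invFun := fun g => (g.σ, g.c)
      left_inv := fun p => rfl
      right_inv := fun g => rfl }

instance : Mul (GenPerm m n) := ⟨fun g h => ⟨g.σ * h.σ, fun j => g.c (h.σ j) + h.c j⟩⟩
instance : One (GenPerm m n) := ⟨⟨1, 0⟩⟩
instance : Inv (GenPerm m n) := ⟨fun g => ⟨g.σ⁻¹, fun j => - g.c (g.σ⁻¹ j)⟩⟩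

@[simp] lemma mul_σ (g h : GenPerm m n) : (g * h).σ = g.σ * h.σ := rfl
@[simp] lemma mul_c (g h : GenPerm m n) (j : Fin n) : (g * h).c j = g.c (h.σ j) + h.c j := rfl
@[simp] lemma one_σ : (1 : GenPerm m n).σ = 1 := rfl
@[simp] lemma one_c (j : Fin n) : (1 : GenPerm m n).c j = 0 := rfl
@[simp] lemma inv_σ (g : GenPerm m n) : (g⁻¹).σ = g.σ⁻¹ := rfl
@[simp] lemma inv_c (g : GenPerm m n) (j : Fin n) : (g⁻¹).c j = - g.c (g.σ⁻¹ j) := rfl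

instance : Group (GenPerm m n) where
  mul_assoc a b c := by
    ext j
    · simp [mul_assoc]
    · simp [add_assoc]
  one_mul a := by
    ext j
    · simp
    · simp
  mul_one a := by
    ext j
    · simp
    · simp
  inv_mul_cancel a := by
    ext j
    · simp
    · simp

/-- The generator `s i`: `s 0` multiplies the first letter's phase by `ω`;
for `1 ≤ i < n`, `s i` swaps positions `i` and `i+1` (1-indexed), i.e. `i-1` and `i`
(0-indexed). -/
def s (i : ℕ) : GenPerm m n :=
  if h : i < n then
    if h0 : i = 0 then ⟨1, fun j => if j = ⟨0, by omega⟩ then 1 else 0⟩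
    else ⟨Equiv.swap ⟨i - 1, by omega⟩ ⟨i, h⟩, 0⟩
  else 1

/-- `t i = s i * s (i-1) * ⋯ * s 1 * s 0`. -/
def t (i : ℕ) : GenPerm m n := ((List.range (i + 1)).map (fun j => (s (i - j) : GenPerm m n))).prod

/-- `rep k = t (n-1) ^ k (n-1) * ⋯ * t 0 ^ k 0`. -/
def rep (k : Fin n → ℕ) : GenPerm m n :=
  (List.ofFn (fun i : Fin n => (t (i : ℕ) : GenPerm m n) ^ k i)).reverse.prod

open scoped Classical in
/-- The flag major index: the sum of the exponents in the canonical representation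
`π = t (n-1) ^ k (n-1) * ⋯ * t 0 ^ k 0` with `0 ≤ k i < m * (i+1)`. -/
noncomputable def flagMajor (π : GenPerm m n) : ℕ :=
  if h : ∃ k : Fin n → ℕ, (∀ i : Fin n, k i < m * ((i : ℕ) + 1)) ∧ π = rep k
  then ∑ i, h.choose i else 0

/-- The major index of a generalized permutation with respect to the linear order
`1·ω^{m-1} < ⋯ < n·ω^{m-1} < ⋯ < 1·ω < ⋯ < n·ω < 1 < ⋯ < n`
(a 1-indexed descent at position `i` contributes `i`). -/
def majG (π : GenPerm m n) : ℕ :=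
  ∑ i ∈ Finset.range n, if h : i + 1 < n then
    (if (π.c ⟨i, by omega⟩).val < (π.c ⟨i + 1, h⟩).val ∨
        (π.c ⟨i, by omega⟩ = π.c ⟨i + 1, h⟩ ∧ π.σ ⟨i + 1, h⟩ < π.σ ⟨i, by omega⟩)
     then i + 1 else 0) else 0

/-- Coxeter length with respect to the generators `s 0, s 1, …, s (n-1)`. -/
noncomputable def len (π : GenPerm m n) : ℕ :=
  sInf {l | ∃ w : List (Fin n), w.length = l ∧ (w.map (fun i => (s (i : ℕ) : GenPerm m n))).prod = π}


/-- `ω = exp(2πi/m)`. -/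
noncomputable def omegaC (m : ℕ) : ℂ := Complex.exp (2 * Real.pi * Complex.I / m)

/-- The image of the monomial `x̄^f ∈ P_n^{⊗t}` under the diagonal action of
`g ∈ C_m ≀ S_n` (which maps `x_{i,j} ↦ ω^{c_g(j)} x_{i, σ_g(j)}` in each tensor
factor `i`). -/
noncomputable def diagMono {m n t : ℕ} (g : GenPerm m n) (f : Fin t × Fin n → ℕ) :
    MvPolynomial (Fin t × Fin n) ℂ :=
  MvPolynomial.monomial (Finsupp.equivFunOnFinite.symm (fun p => f (p.1, g.σ⁻¹ p.2)))
    (omegaC m ^ (∑ p : Fin t × Fin n, (g.c p.2).val * f p))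

/-- The symmetrization `π(x̄^f) = Σ_{g ∈ G} φ_D(g)(x̄^f)`. -/
noncomputable def symmF (m n t : ℕ) [NeZero m] (f : Fin t × Fin n → ℕ) :
    MvPolynomial (Fin t × Fin n) ℂ :=
  ∑ g : GenPerm m n, diagMono g f

/-! When every column sum of `f` vanishes mod `m`, all phases `ω^{Σ c_g(j) f(i,j)}` equal `1`, so
`π(x̄^f)` is a sum of monomials with coefficient `1` whose exponent arrays are the column
permutations of `f`. Its support is therefore the column-permutation orbit of `f`, while `π` is
constant on such orbits; each of the three conditions says that `f` and `h` share an orbit. -/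

variable {t : ℕ}

/-- The exponent array of `x̄^f` after moving column `j` to column `σ j`. -/
def permCols (σ : Equiv.Perm (Fin n)) (f : Fin t × Fin n → ℕ) : Fin t × Fin n → ℕ :=
  fun p => f (p.1, σ⁻¹ p.2)

@[simp] lemma permCols_one (f : Fin t × Fin n → ℕ) : permCols 1 f = f := rfl

lemma permCols_mul (σ τ : Equiv.Perm (Fin n)) (f : Fin t × Fin n → ℕ) :
    permCols (σ * τ) f = permCols σ (permCols τ f) := rfl

def ofPerm (σ : Equiv.Perm (Fin n)) : GenPerm m n := ⟨σ, 0⟩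

lemma omegaC_pow_eq_one_of_dvd [NeZero m] {k : ℕ} (hk : m ∣ k) : omegaC m ^ k = 1 := by
  obtain ⟨k, rfl⟩ := hk
  have hm : (m : ℂ) ≠ 0 := Nat.cast_ne_zero.mpr (NeZero.ne m)
  rw [pow_mul, omegaC, ← Complex.exp_nat_mul, mul_div_cancel₀ _ hm, Complex.exp_two_pi_mul_I,
    one_pow]

lemma dvd_sum_mul_of_dvd_column_sums (a : Fin n → ℕ) (f : Fin t × Fin n → ℕ)
    (hf : ∀ j, m ∣ ∑ i, f (i, j)) : m ∣ ∑ p : Fin t × Fin n, a p.2 * f p := by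
  rw [Fintype.sum_prod_type, Finset.sum_comm]
  exact Finset.dvd_sum fun j _ => by
    simpa only [← Finset.mul_sum] using (hf j).mul_left (a j)

lemma diagMono_eq_monomial [NeZero m] (g : GenPerm m n) (f : Fin t × Fin n → ℕ)
    (hf : ∀ j, (∑ i, f (i, j)) % m = 0) :
    diagMono g f = MvPolynomial.monomial (Finsupp.equivFunOnFinite.symm (permCols g.σ f)) 1 :=
  congrArg (MvPolynomial.monomial _) <| omegaC_pow_eq_one_of_dvd <|
    dvd_sum_mul_of_dvd_column_sums (fun j => (g.c j).val) f fun j => Nat.dvd_of_mod_eq_zero (hf j)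

lemma diagMono_permCols (g : GenPerm m n) (σ : Equiv.Perm (Fin n)) (f : Fin t × Fin n → ℕ) :
    diagMono g (permCols σ f) = diagMono (g * ofPerm σ) f := by
  have phase : ∑ p : Fin t × Fin n, (g.c p.2).val * permCols σ f p =
      ∑ p : Fin t × Fin n, (g.c (σ p.2)).val * f p :=
    Fintype.sum_equiv ((Equiv.refl _).prodCongr σ⁻¹) _ _ fun p => by simp [permCols, Prod.map]
  rw [diagMono, diagMono, phase]
  simp [ofPerm, permCols]

lemma symmF_permCols [NeZero m] (σ : Equiv.Perm (Fin n)) (f : Fin t × Fin n → ℕ) :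
    symmF m n t (permCols σ f) = symmF m n t f := by
  simp only [symmF, diagMono_permCols]
  exact Fintype.sum_equiv (Equiv.mulRight (ofPerm σ)) _ _ fun _ => rfl

lemma mem_support_symmF_iff [NeZero m] (f : Fin t × Fin n → ℕ)
    (hf : ∀ j, (∑ i, f (i, j)) % m = 0) (d : Fin t × Fin n →₀ ℕ) :
    d ∈ (symmF m n t f).support ↔ ∃ σ : Equiv.Perm (Fin n), permCols σ f = d := by
  have coeff_eq : (symmF m n t f).coeff d =
      (#{g : GenPerm m n | permCols g.σ f = d} : ℂ) := by
    simp only [symmF, MvPolynomial.coeff_sum, diagMono_eq_monomial _ f hf,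
      MvPolynomial.coeff_monomial, Equiv.symm_apply_eq, Finset.sum_boole]
    rfl
  rw [MvPolynomial.mem_support_iff, coeff_eq, Nat.cast_ne_zero, ← Nat.pos_iff_ne_zero,
    Finset.card_pos, Finset.filter_nonempty_iff]
  exact ⟨fun ⟨g, _, hg⟩ => ⟨g.σ, hg⟩, fun ⟨σ, hσ⟩ => ⟨ofPerm σ, Finset.mem_univ _, hσ⟩⟩

/-- for exponent arrays `f, h` with all column sums `≡ 0 (mod m)`,
the supports of `π(x̄^f)` and `π(x̄^h)` intersect iff `π(x̄^f) = π(x̄^h)` iff `h` is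
obtained from `f` by permuting columns. -/
theorem symmF_support_trichotomy (m n t : ℕ) [NeZero m] (f h : Fin t × Fin n → ℕ)
    (hf : ∀ j : Fin n, (∑ i : Fin t, f (i, j)) % m = 0)
    (hh : ∀ j : Fin n, (∑ i : Fin t, h (i, j)) % m = 0) :
    (((symmF m n t f).support ∩ (symmF m n t h).support).Nonempty ↔
        symmF m n t f = symmF m n t h) ∧
    (symmF m n t f = symmF m n t h ↔
        ∃ σ : Equiv.Perm (Fin n), ∀ (i : Fin t) (j : Fin n), h (i, j) = f (i, σ j)) := by
  have f_mem : Finsupp.equivFunOnFinite.symm f ∈ (symmF m n t f).support :=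
    (mem_support_symmF_iff f hf _).2 ⟨1, rfl⟩
  have inter_to_perm : ((symmF m n t f).support ∩ (symmF m n t h).support).Nonempty →
      ∃ σ : Equiv.Perm (Fin n), ∀ i j, h (i, j) = f (i, σ j) := by
    rintro ⟨d, hd⟩
    rw [Finset.mem_inter, mem_support_symmF_iff f hf, mem_support_symmF_iff h hh] at hd
    obtain ⟨⟨σ, hσ⟩, τ, hτ⟩ := hd
    have h_eq : h = permCols (τ⁻¹ * σ) f := by
      rw [permCols_mul, hσ, ← hτ, ← permCols_mul, inv_mul_cancel, permCols_one]
    exact ⟨σ⁻¹ * τ, fun i j => by simp [h_eq, permCols]⟩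
  have perm_to_eq : (∃ σ : Equiv.Perm (Fin n), ∀ i j, h (i, j) = f (i, σ j)) →
      symmF m n t f = symmF m n t h := by
    rintro ⟨σ, hσ⟩
    have h_eq : h = permCols σ⁻¹ f := funext fun p => by simp [hσ p.1 p.2, permCols]
    rw [h_eq, symmF_permCols]
  have eq_to_inter : symmF m n t f = symmF m n t h →
      ((symmF m n t f).support ∩ (symmF m n t h).support).Nonempty :=
    fun he => ⟨_, Finset.mem_inter.2 ⟨f_mem, he ▸ f_mem⟩⟩
  exact ⟨⟨perm_to_eq ∘ inter_to_perm, eq_to_inter⟩, ⟨inter_to_perm ∘ eq_to_inter, perm_to_eq⟩⟩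

end GenPerm
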